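/- Robust policy gradient, almost-everywhere part: under Assumption 1 with Θ ⊆ ℝ^N open and convex, for every probability distribution ρ on S the function J_ρ is differentiable at Lebesgue-almost every θ ∈ Θ, and at every point θ of differentiability of J_ρ one has ∇J_ρ(θ) = ψ_ρ(θ) for every choice of maximizing state s_θ. -/

import Mathlib

set_option autoImplicit false

open Finset MeasureTheory

/-- The stochastic matrix of a policy `π` under the kernel `p`:
`P_π(s,s') = ∑ a, π(a|s)·p(s'|s,a)`. -/
noncomputable def pmat {S A : Type*} [Fintype A] (π : S → A → ℝ) (p : S → A → S → ℝ) :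
    Matrix S S ℝ :=
  Matrix.of fun s s' => ∑ a, π s a * p s a s'

/-- The discounted visitation distribution
`d^π_s(s') = (1-γ+γR)·∑_{t≥0} (γ(1-R))^t·(P_π^t)(s,s')`. -/
noncomputable def dvisit {S A : Type*} [Fintype S] [Fintype A] [DecidableEq S]
    (γ R : ℝ) (π : S → A → ℝ) (p : S → A → S → ℝ) (s s' : S) : ℝ :=
  (1 - γ + γ * R) * ∑' t : ℕ, (γ * (1 - R)) ^ t * ((pmat π p) ^ t) s s'

/-!
When the maximum of `V^{π_θ}` is attained at `s₀`, the robust Bellman equation is the ordinary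
Bellman equation for the kernel `K_θ = (1-R)·P_{π_θ} + R·1δ_{s₀}ᵀ`, so `V^{π_θ} = (1 - γK_θ)⁻¹ c_θ`.
Keeping the anchor `s₀` fixed, `g(θ') = ρ·(1 - γK_{θ'})⁻¹ c_{θ'}` is a lower bound for `J_ρ(θ')`
(the robust operator dominates the anchored one) with equality at `θ`. The function `g` is
differentiable at `θ`, so wherever `J_ρ` is differentiable the two gradients coincide. The
resolvent identity gives `∇g`, and the Sherman–Morrison formula
`(1 - γK_θ)⁻¹ = (1 + γR/(1-γ)·1δ_{s₀}ᵀ)(1 - γ(1-R)P_{π_θ})⁻¹` rewrites its weights in terms of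
the visitation distributions.

Almost-everywhere differentiability is Rademacher's theorem: the robust Bellman operator is a
`γ`-contraction in the sup norm, so the value depends Lipschitz-continuously on the policy, and
hence on `θ`.
-/

open Matrix Asymptotics Filter Topology

lemma abs_sum_mul_le_of_mem_stdSimplex {ι : Type*} [Fintype ι] {w x : ι → ℝ}
    (hw : w ∈ stdSimplex ℝ ι) {b : ℝ} (hx : ∀ i, |x i| ≤ b) : |∑ i, w i * x i| ≤ b :=
  calc |∑ i, w i * x i| ≤ ∑ i, w i * |x i| := by
        refine (abs_sum_le_sum_abs _ _).trans_eq (sum_congr rfl fun i _ => ?_)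
        rw [abs_mul, abs_of_nonneg (hw.1 i)]
    _ ≤ ∑ i, w i * b := sum_le_sum fun i _ => mul_le_mul_of_nonneg_left (hx i) (hw.1 i)
    _ = b := by rw [← sum_mul, hw.2, one_mul]

section FiniteSup

variable {S : Type*} [Fintype S] [Nonempty S]

lemma sup'_univ_eq_of_forall_le (V : S → ℝ) {s₀ : S} (hs₀ : ∀ s, V s ≤ V s₀) :
    univ.sup' univ_nonempty V = V s₀ :=
  le_antisymm (sup'_le _ _ fun s _ => hs₀ s) (le_sup' V (mem_univ s₀))

lemma abs_sup'_sub_sup'_le_dist (V W : S → ℝ) :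
    |univ.sup' univ_nonempty V - univ.sup' univ_nonempty W| ≤ dist V W := by
  have key : ∀ V W : S → ℝ,
      univ.sup' univ_nonempty V ≤ univ.sup' univ_nonempty W + dist V W := fun V W =>
    sup'_le _ _ fun s _ => by
      have h := (le_abs_self _).trans ((Real.dist_eq (V s) (W s)).symm.trans_le
        (dist_le_pi_dist V W s))
      linarith [le_sup' W (mem_univ s)]
  rw [abs_sub_le_iff]
  constructor <;> linarith [key V W, key W V, dist_comm V W]

end FiniteSup

theorem HasFDerivAt.smul_of_continuousAt_of_eq_zero {𝕜 E F : Type*} [NontriviallyNormedField 𝕜]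
    [NormedAddCommGroup E] [NormedSpace 𝕜 E] [NormedAddCommGroup F] [NormedSpace 𝕜 F]
    {w : E → 𝕜} {e : E → F} {e' : E →L[𝕜] F} {x : E} (hw : ContinuousAt w x)
    (he : HasFDerivAt e e' x) (h0 : e x = 0) :
    HasFDerivAt (fun y => w y • e y) (w x • e') x := by
  refine HasFDerivAt.of_isLittleO ?_
  have h₁ : (fun y => w x • (e y - e x - e' (y - x))) =o[𝓝 x] fun y => y - x :=
    he.isLittleO.const_smul_left (w x)
  have h₂ : (fun y => (w y - w x) • (e y - e x)) =o[𝓝 x] fun y => y - x := by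
    simpa using ((isLittleO_one_iff 𝕜).2 (tendsto_sub_nhds_zero_iff.2 hw)).smul_isBigO
      he.isBigO_sub
  refine (h₁.add h₂).congr_left fun y => ?_
  simp only [h0, smul_zero, sub_zero, _root_.smul_apply, smul_sub, sub_smul]
  abel

section Gradient

variable {E : Type*} [NormedAddCommGroup E] [InnerProductSpace ℝ E] [CompleteSpace E]

theorem gradient_eq_of_eventually_le {f g : E → ℝ} {g' x : E} (hf : DifferentiableAt ℝ f x)
    (hg : HasGradientAt g g' x) (hle : ∀ᶠ y in 𝓝 x, g y ≤ f y) (heq : g x = f x) :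
    gradient f x = g' := by
  have hmin : IsLocalMin (fun y => f y - g y) x := by
    filter_upwards [hle] with y hy
    linarith
  have h0 := hmin.hasFDerivAt_eq_zero (hf.hasFDerivAt.sub hg.hasFDerivAt)
  rw [sub_eq_zero] at h0
  rw [gradient, h0, LinearIsometryEquiv.symm_apply_apply]

theorem Convex.abs_sub_le_of_hasGradientAt {s : Set E} (hs : Convex ℝ s) {f : E → ℝ}
    {f' : E → E} {C : ℝ} (hf : ∀ x ∈ s, HasGradientAt f (f' x) x) (hC : ∀ x ∈ s, ‖f' x‖ ≤ C)
    {x y : E} (hx : x ∈ s) (hy : y ∈ s) : |f x - f y| ≤ C * ‖x - y‖ := by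
  simpa using hs.norm_image_sub_le_of_norm_hasFDerivWithin_le
    (fun z hz => (hf z hz).hasFDerivAt.hasFDerivWithinAt) (fun z hz => by simpa using hC z hz) hy hx

end Gradient

namespace Matrix

lemma eq_inv_mulVec_of_mulVec_eq {n α : Type*} [Fintype n] [DecidableEq n] [CommRing α]
    {B : Matrix n n α} (hB : IsUnit B.det) {x y : n → α} (h : B *ᵥ x = y) : x = B⁻¹ *ᵥ y := by
  rw [← h, mulVec_mulVec, nonsing_inv_mul _ hB, one_mulVec]

section NeumannSeries

variable {S : Type*} [Fintype S] [DecidableEq S] {P : Matrix S S ℝ} {β : ℝ}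
  (hP : P ∈ rowStochastic ℝ S) (hβ₀ : 0 ≤ β) (hβ₁ : β < 1)
include hP hβ₀ hβ₁

lemma summable_smul_pow_of_mem_rowStochastic : Summable fun t : ℕ => (β • P) ^ t := by
  refine Pi.summable.2 fun s => Pi.summable.2 fun s' => ?_
  refine (summable_geometric_of_lt_one hβ₀ hβ₁).of_nonneg_of_le (fun t => ?_) (fun t => ?_) <;>
    simp only [smul_pow, smul_apply, smul_eq_mul]
  · exact mul_nonneg (pow_nonneg hβ₀ t) (nonneg_of_mem_rowStochastic (pow_mem hP t))
  · exact mul_le_of_le_one_right (pow_nonneg hβ₀ t) (le_one_of_mem_rowStochastic (pow_mem hP t))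

lemma one_sub_smul_mul_tsum_pow : (1 - β • P) * ∑' t : ℕ, (β • P) ^ t = 1 := by
  have hs := summable_smul_pow_of_mem_rowStochastic hP hβ₀ hβ₁
  have hshift : ∑' t : ℕ, (β • P) ^ t = 1 + β • P * ∑' t : ℕ, (β • P) ^ t := by
    rw [← hs.tsum_mul_left, hs.tsum_eq_zero_add]
    simp only [pow_zero, pow_succ']
  rw [sub_mul, one_mul, sub_eq_iff_eq_add]
  exact hshift

lemma isUnit_det_one_sub_smul : IsUnit (1 - β • P).det :=
  isUnit_det_of_right_inverse (one_sub_smul_mul_tsum_pow hP hβ₀ hβ₁)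

lemma inv_one_sub_smul_apply (s s' : S) :
    (1 - β • P)⁻¹ s s' = ∑' t : ℕ, β ^ t * (P ^ t) s s' := by
  have hs := summable_smul_pow_of_mem_rowStochastic hP hβ₀ hβ₁
  rw [inv_eq_right_inv (one_sub_smul_mul_tsum_pow hP hβ₀ hβ₁),
    ← (Pi.hasSum.1 (Pi.hasSum.1 hs.hasSum s) s').tsum_eq]
  simp only [smul_pow, smul_apply, smul_eq_mul]

lemma inv_one_sub_smul_nonneg (s s' : S) : 0 ≤ (1 - β • P)⁻¹ s s' := by
  rw [inv_one_sub_smul_apply hP hβ₀ hβ₁]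
  exact tsum_nonneg fun t =>
    mul_nonneg (pow_nonneg hβ₀ t) (nonneg_of_mem_rowStochastic (pow_mem hP t))

end NeumannSeries

end Matrix

namespace RobustMDP

section Kernels

variable {S A : Type*} [Fintype S] [Fintype A] [DecidableEq S]

def jumpKernel (s₀ : S) : Matrix S S ℝ := Matrix.of fun _ => Pi.single s₀ 1

def contaminated (R : ℝ) (P : Matrix S S ℝ) (s₀ : S) : Matrix S S ℝ :=
  (1 - R) • P + R • jumpKernel s₀

lemma pmat_mem_rowStochastic {π : S → A → ℝ} {p : S → A → S → ℝ}
    (hπ : ∀ s, π s ∈ stdSimplex ℝ A) (hp : ∀ s a, p s a ∈ stdSimplex ℝ S) :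
    pmat π p ∈ rowStochastic ℝ S := by
  refine mem_rowStochastic_iff_sum.2
    ⟨fun s s' => sum_nonneg fun a _ => mul_nonneg ((hπ s).1 a) ((hp s a).1 s'), fun s => ?_⟩
  simp only [pmat, of_apply]
  rw [sum_comm]
  simp only [← mul_sum, (hp _ _).2, mul_one, (hπ s).2]

lemma jumpKernel_mem_rowStochastic (s₀ : S) : jumpKernel s₀ ∈ rowStochastic ℝ S :=
  mem_rowStochastic_iff_sum.2 ⟨fun _ s' => by
    simp only [jumpKernel, of_apply, Pi.single_apply]; positivity,
    fun _ => by simp [jumpKernel]⟩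

lemma mul_jumpKernel {P : Matrix S S ℝ} (hP : P ∈ rowStochastic ℝ S) (s₀ : S) :
    P * jumpKernel s₀ = jumpKernel s₀ := by
  ext s s'
  simp only [jumpKernel, mul_apply, of_apply, ← sum_mul, sum_row_of_mem_rowStochastic hP, one_mul]

lemma jumpKernel_mul_apply (s₀ : S) (M : Matrix S S ℝ) (s s' : S) :
    (jumpKernel s₀ * M) s s' = M s₀ s' := by
  simp [jumpKernel, mul_apply, Pi.single_apply]

lemma contaminated_mem_rowStochastic {R : ℝ} (hR₀ : 0 ≤ R) (hR₁ : R ≤ 1) {P : Matrix S S ℝ}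
    (hP : P ∈ rowStochastic ℝ S) (s₀ : S) : contaminated R P s₀ ∈ rowStochastic ℝ S :=
  convex_rowStochastic hP (jumpKernel_mem_rowStochastic s₀) (by linarith) hR₀ (by ring)

variable {γ R : ℝ} (hγ₀ : 0 ≤ γ) (hγ₁ : γ < 1) (hR₀ : 0 ≤ R) (hR₁ : R ≤ 1)
include hγ₀ hγ₁ hR₀ hR₁

lemma mul_one_sub_mem_Ico : γ * (1 - R) ∈ Set.Ico 0 1 :=
  ⟨by nlinarith, by nlinarith⟩

lemma isUnit_det_one_sub_smul_contaminated {π : S → A → ℝ} {p : S → A → S → ℝ}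
    (hπ : ∀ s, π s ∈ stdSimplex ℝ A) (hp : ∀ s a, p s a ∈ stdSimplex ℝ S) (s₀ : S) :
    IsUnit (1 - γ • contaminated R (pmat π p) s₀).det :=
  isUnit_det_one_sub_smul (contaminated_mem_rowStochastic hR₀ hR₁ (pmat_mem_rowStochastic hπ hp) s₀)
    hγ₀ hγ₁

lemma inv_one_sub_smul_contaminated {P : Matrix S S ℝ} (hP : P ∈ rowStochastic ℝ S) (s₀ : S) :
    (1 - γ • contaminated R P s₀)⁻¹
      = (1 + (γ * R / (1 - γ)) • jumpKernel s₀) * (1 - (γ * (1 - R)) • P)⁻¹ := by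
  obtain ⟨hβ₀, hβ₁⟩ := mul_one_sub_mem_Ico hγ₀ hγ₁ hR₀ hR₁
  have hk : γ * R / (1 - γ) * (1 - γ) = γ * R := div_mul_cancel₀ _ (by linarith)
  -- `P * E = E` and `E * E = E` for `E = jumpKernel s₀`, leaving a linear identity in `1, P, E`
  have key : (1 - γ • contaminated R P s₀) * (1 + (γ * R / (1 - γ)) • jumpKernel s₀)
      = 1 - (γ * (1 - R)) • P := by
    simp only [contaminated, smul_add, smul_smul, sub_mul, one_mul, mul_add, mul_one, add_mul,
      smul_mul_assoc, mul_smul_comm, mul_jumpKernel hP,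
      mul_jumpKernel (jumpKernel_mem_rowStochastic s₀)]
    linear_combination (norm := module) hk • jumpKernel s₀
  refine inv_eq_right_inv ?_
  rw [← Matrix.mul_assoc, key, mul_nonsing_inv _ (isUnit_det_one_sub_smul hP hβ₀ hβ₁)]

lemma dvisit_eq {π : S → A → ℝ} {p : S → A → S → ℝ} (hP : pmat π p ∈ rowStochastic ℝ S)
    (s s' : S) :
    dvisit γ R π p s s' = (1 - γ + γ * R) * (1 - (γ * (1 - R)) • pmat π p)⁻¹ s s' := by
  obtain ⟨hβ₀, hβ₁⟩ := mul_one_sub_mem_Ico hγ₀ hγ₁ hR₀ hR₁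
  rw [dvisit, inv_one_sub_smul_apply hP hβ₀ hβ₁]

lemma vecMul_inv_one_sub_smul_contaminated {π : S → A → ℝ} {p : S → A → S → ℝ}
    (hP : pmat π p ∈ rowStochastic ℝ S) (s₀ : S) {ρ : S → ℝ} (hρ : ∑ s, ρ s = 1) (s : S) :
    (ρ ᵥ* (1 - γ • contaminated R (pmat π p) s₀)⁻¹) s
      = γ * R / ((1 - γ) * (1 - γ + γ * R)) * dvisit γ R π p s₀ s
        + 1 / (1 - γ + γ * R) * ∑ s', ρ s' * dvisit γ R π p s' s := by
  set N := (1 - (γ * (1 - R)) • pmat π p)⁻¹ with hN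
  have hM : ∀ u, (1 - γ • contaminated R (pmat π p) s₀)⁻¹ u s
      = N u s + γ * R / (1 - γ) * N s₀ s := fun u => by
    rw [inv_one_sub_smul_contaminated hγ₀ hγ₁ hR₀ hR₁ hP, add_mul, one_mul, Matrix.add_apply,
      smul_mul_assoc, Matrix.smul_apply, jumpKernel_mul_apply, smul_eq_mul]
  have hβ : 1 - γ + γ * R ≠ 0 := by nlinarith
  calc (ρ ᵥ* (1 - γ • contaminated R (pmat π p) s₀)⁻¹) s
      = ∑ u, ρ u * N u s + γ * R / (1 - γ) * N s₀ s := by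
        simp only [vecMul, dotProduct, hM, mul_add, sum_add_distrib, ← sum_mul, hρ, one_mul]
    _ = _ := by
        simp only [dvisit_eq hγ₀ hγ₁ hR₀ hR₁ hP, ← hN, mul_left_comm (ρ _), ← mul_sum]
        field_simp
        ring

lemma continuousAt_inv_one_sub_smul_contaminated {E : Type*} [TopologicalSpace E]
    {π : E → S → A → ℝ} {p : S → A → S → ℝ} {θ : E}
    (hπc : ∀ s a, ContinuousAt (fun θ' => π θ' s a) θ) (hπ : ∀ s, π θ s ∈ stdSimplex ℝ A)
    (hp : ∀ s a, p s a ∈ stdSimplex ℝ S) (s₀ : S) :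
    ContinuousAt (fun θ' => (1 - γ • contaminated R (pmat (π θ') p) s₀)⁻¹) θ := by
  have hP : ContinuousAt (fun θ' => pmat (π θ') p) θ :=
    continuousAt_pi.2 fun s => continuousAt_pi.2 fun s' =>
      tendsto_finsetSum _ fun a _ => (hπc s a).mul continuousAt_const
  have hB : ContinuousAt (fun θ' => 1 - γ • contaminated R (pmat (π θ') p) s₀) θ :=
    continuousAt_const.sub (((hP.const_smul (1 - R)).add continuousAt_const).const_smul γ)
  have hinv := continuousAt_matrix_inv _ (NormedRing.inverse_continuousAt
    (isUnit_det_one_sub_smul_contaminated hγ₀ hγ₁ hR₀ hR₁ hπ hp s₀).unit)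
  exact hinv.comp_of_eq hB rfl

end Kernels

section Bellman

variable {S A : Type*} [Fintype S] [Nonempty S] {c : S → A → ℝ} {γ R : ℝ} {p : S → A → S → ℝ}

variable (c γ R p) in
def robustQ (V : S → ℝ) (s : S) (a : A) : ℝ :=
  c s a + γ * (1 - R) * ∑ s', p s a s' * V s' + γ * R * univ.sup' univ_nonempty V

variable (hp : ∀ s a, p s a ∈ stdSimplex ℝ S) (hγ₀ : 0 ≤ γ) (hR₀ : 0 ≤ R) (hR₁ : R ≤ 1)

include hp hγ₀ hR₀ hR₁ in
lemma abs_robustQ_sub_le (V W : S → ℝ) (s : S) (a : A) :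
    |robustQ c γ R p V s a - robustQ c γ R p W s a| ≤ γ * dist V W := by
  have hpV : |∑ s', p s a s' * (V s' - W s')| ≤ dist V W :=
    abs_sum_mul_le_of_mem_stdSimplex (hp s a) fun s' =>
      (Real.dist_eq (V s') (W s')).symm.trans_le (dist_le_pi_dist V W s')
  have hsup := abs_sup'_sub_sup'_le_dist V W
  calc |robustQ c γ R p V s a - robustQ c γ R p W s a|
      = |γ * (1 - R) * ∑ s', p s a s' * (V s' - W s')
          + γ * R * (univ.sup' univ_nonempty V - univ.sup' univ_nonempty W)| := by
        simp only [robustQ, mul_sub, sum_sub_distrib]; ring_nf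
    _ ≤ γ * (1 - R) * dist V W + γ * R * dist V W := by
        refine (abs_add_le _ _).trans (add_le_add ?_ ?_) <;>
          rw [abs_mul, abs_of_nonneg (by positivity)] <;> gcongr
    _ = γ * dist V W := by ring

include hp hγ₀ hR₀ hR₁ in
lemma abs_robustQ_le (hc : ∀ s a, |c s a| ≤ 1) (V : S → ℝ) (s : S) (a : A) :
    |robustQ c γ R p V s a| ≤ 1 + γ * ‖V‖ := by
  have hpV : |∑ s', p s a s' * V s'| ≤ ‖V‖ :=
    abs_sum_mul_le_of_mem_stdSimplex (hp s a) fun s' => norm_le_pi_norm V s'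
  obtain ⟨s₀, -, hs₀⟩ := exists_mem_eq_sup' univ_nonempty V
  have hsup : |univ.sup' univ_nonempty V| ≤ ‖V‖ := hs₀ ▸ norm_le_pi_norm V s₀
  calc |robustQ c γ R p V s a|
      ≤ |c s a| + γ * (1 - R) * |∑ s', p s a s' * V s'|
          + γ * R * |univ.sup' univ_nonempty V| := by
        refine (abs_add_le _ _).trans (add_le_add ((abs_add_le _ _).trans ?_) ?_) <;>
          simp only [abs_mul, abs_of_nonneg hγ₀, abs_of_nonneg hR₀,
            abs_of_nonneg (sub_nonneg.2 hR₁), le_refl]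
    _ ≤ 1 + γ * (1 - R) * ‖V‖ + γ * R * ‖V‖ := by
        gcongr
        exact hc s a
    _ = 1 + γ * ‖V‖ := by ring

variable [Fintype A]

variable (c γ R p) in
def robustBellman (π : S → A → ℝ) (V : S → ℝ) : S → ℝ :=
  fun s => ∑ a, π s a * robustQ c γ R p V s a

include hp hγ₀ hR₀ hR₁

lemma lipschitzWith_robustBellman {π : S → A → ℝ} (hπ : ∀ s, π s ∈ stdSimplex ℝ A) :
    LipschitzWith (Real.toNNReal γ) (robustBellman c γ R p π) :=
  LipschitzWith.of_dist_le' fun V W => dist_pi_le_iff'.2 fun s => by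
    rw [Real.dist_eq, robustBellman, robustBellman, ← sum_sub_distrib]
    simp only [← mul_sub]
    exact abs_sum_mul_le_of_mem_stdSimplex (hπ s) (abs_robustQ_sub_le hp hγ₀ hR₀ hR₁ V W s)

variable (hγ₁ : γ < 1) (hc : ∀ s a, |c s a| ≤ 1)
include hγ₁ hc

lemma norm_le_of_robustBellman_eq {π : S → A → ℝ} (hπ : ∀ s, π s ∈ stdSimplex ℝ A) {V : S → ℝ}
    (hV : robustBellman c γ R p π V = V) : ‖V‖ ≤ (1 - γ)⁻¹ := by
  have h : ‖V‖ ≤ 1 + γ * ‖V‖ := (pi_norm_le_iff_of_nonneg (by positivity)).2 fun s => by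
    rw [Real.norm_eq_abs, ← congrFun hV s]
    exact abs_sum_mul_le_of_mem_stdSimplex (hπ s) (abs_robustQ_le hp hγ₀ hR₀ hR₁ hc V s)
  rw [← one_div, le_div_iff₀ (by linarith)]
  linarith

lemma dist_le_of_robustBellman_eq {π₁ π₂ : S → A → ℝ} (hπ₁ : ∀ s, π₁ s ∈ stdSimplex ℝ A)
    (hπ₂ : ∀ s, π₂ s ∈ stdSimplex ℝ A) {V₁ V₂ : S → ℝ} (h₁ : robustBellman c γ R p π₁ V₁ = V₁)
    (h₂ : robustBellman c γ R p π₂ V₂ = V₂) {δ : ℝ} (hδ₀ : 0 ≤ δ)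
    (hδ : ∀ s a, |π₁ s a - π₂ s a| ≤ δ) :
    dist V₁ V₂ ≤ Fintype.card A * δ / (1 - γ) ^ 2 := by
  have hγ : 0 < 1 - γ := by linarith
  have hq : ∀ s a, |robustQ c γ R p V₁ s a| ≤ (1 - γ)⁻¹ := fun s a => by
    have := norm_le_of_robustBellman_eq hp hγ₀ hR₀ hR₁ hγ₁ hc hπ₁ h₁
    calc |robustQ c γ R p V₁ s a| ≤ 1 + γ * ‖V₁‖ := abs_robustQ_le hp hγ₀ hR₀ hR₁ hc V₁ s a
      _ ≤ 1 + γ * (1 - γ)⁻¹ := by gcongr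
      _ = (1 - γ)⁻¹ := by field_simp; ring
  have hstep : dist V₁ (robustBellman c γ R p π₂ V₁) ≤ Fintype.card A * δ * (1 - γ)⁻¹ :=
    calc dist V₁ (robustBellman c γ R p π₂ V₁)
        = dist (robustBellman c γ R p π₁ V₁) (robustBellman c γ R p π₂ V₁) := by rw [h₁]
      _ ≤ Fintype.card A * δ * (1 - γ)⁻¹ := dist_pi_le_iff'.2 fun s => by
          rw [Real.dist_eq, robustBellman, robustBellman, ← sum_sub_distrib]
          simp only [← sub_mul]
          refine (abs_sum_le_sum_abs _ _).trans ?_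
          rw [mul_assoc, ← nsmul_eq_mul, ← card_univ, ← sum_const]
          exact sum_le_sum fun a _ => by
            rw [abs_mul]
            exact mul_le_mul (hδ s a) (hq s a) (abs_nonneg _) hδ₀
  have hK : ContractingWith (Real.toNNReal γ) (robustBellman c γ R p π₂) :=
    ⟨Real.toNNReal_lt_one.2 hγ₁, lipschitzWith_robustBellman hp hγ₀ hR₀ hR₁ hπ₂⟩
  calc dist V₁ V₂ ≤ dist V₁ (robustBellman c γ R p π₂ V₁) / (1 - γ) := by
        simpa [Real.coe_toNNReal _ hγ₀] using hK.dist_le_of_fixedPoint V₁ h₂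
    _ ≤ Fintype.card A * δ * (1 - γ)⁻¹ / (1 - γ) := by gcongr
    _ = Fintype.card A * δ / (1 - γ) ^ 2 := by field_simp

end Bellman

section AnchoredValue

variable {S A : Type*} [Fintype S] [Fintype A] [Nonempty S] [DecidableEq S]
  {c : S → A → ℝ} {γ R : ℝ} {p : S → A → S → ℝ}

variable (c γ R p) in
noncomputable def anchoredValue (π : S → A → ℝ) (s₀ : S) : S → ℝ :=
  (1 - γ • contaminated R (pmat π p) s₀)⁻¹ *ᵥ fun s => ∑ a, π s a * c s a

lemma one_sub_smul_contaminated_mulVec {π : S → A → ℝ} (hπ : ∀ s, ∑ a, π s a = 1)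
    (V : S → ℝ) (s₀ : S) :
    (1 - γ • contaminated R (pmat π p) s₀) *ᵥ V
      = (fun s => ∑ a, π s a * c s a) + (fun _ => γ * R * (univ.sup' univ_nonempty V - V s₀))
        + (V - robustBellman c γ R p π V) := by
  have hP : ∀ s, (pmat π p *ᵥ V) s = ∑ a, π s a * ∑ s', p s a s' * V s' := fun s => by
    simp only [mulVec, dotProduct, pmat, of_apply, sum_mul, mul_sum, mul_assoc]
    exact sum_comm
  have hE : ∀ s, (jumpKernel s₀ *ᵥ V) s = V s₀ := fun s => by
    simp [mulVec, dotProduct, jumpKernel, Pi.single_apply]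
  have hT : ∀ s, robustBellman c γ R p π V s = ∑ a, π s a * c s a
      + γ * (1 - R) * ∑ a, π s a * ∑ s', p s a s' * V s'
      + γ * R * univ.sup' univ_nonempty V := fun s => by
    simp only [robustBellman, robustQ, mul_add, sum_add_distrib, ← sum_mul, hπ s, one_mul,
      mul_left_comm (π s _), ← mul_sum]
  funext s
  simp only [sub_mulVec, one_mulVec, smul_mulVec, contaminated, add_mulVec, Pi.add_apply,
    Pi.sub_apply, Pi.smul_apply, smul_eq_mul, hP, hE, hT]
  ring

variable (hp : ∀ s a, p s a ∈ stdSimplex ℝ S) (hγ₀ : 0 ≤ γ) (hγ₁ : γ < 1) (hR₀ : 0 ≤ R)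
  (hR₁ : R ≤ 1) {π : S → A → ℝ} {V : S → ℝ} (hV : robustBellman c γ R p π V = V)
include hp hγ₀ hγ₁ hR₀ hR₁ hV

lemma anchoredValue_le (hπ : ∀ s, π s ∈ stdSimplex ℝ A) (s₀ s : S) :
    anchoredValue c γ R p π s₀ s ≤ V s := by
  have h := one_sub_smul_contaminated_mulVec (c := c) (γ := γ) (R := R) (p := p)
    (fun s => (hπ s).2) V s₀
  rw [hV, sub_self, add_zero] at h
  rw [eq_inv_mulVec_of_mulVec_eq (isUnit_det_one_sub_smul_contaminated hγ₀ hγ₁ hR₀ hR₁ hπ hp s₀) h,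
    mulVec_add, anchoredValue, Pi.add_apply, le_add_iff_nonneg_right]
  refine sum_nonneg fun s' _ => mul_nonneg ?_ ?_
  · exact inv_one_sub_smul_nonneg
      (contaminated_mem_rowStochastic hR₀ hR₁ (pmat_mem_rowStochastic hπ hp) s₀) hγ₀ hγ₁ s s'
  · exact mul_nonneg (mul_nonneg hγ₀ hR₀) (sub_nonneg.2 (le_sup' V (mem_univ s₀)))

variable {s₀ : S} (hs₀ : ∀ s, V s ≤ V s₀)
include hs₀

lemma anchoredValue_eq (hπ : ∀ s, π s ∈ stdSimplex ℝ A) : anchoredValue c γ R p π s₀ = V := by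
  refine (eq_inv_mulVec_of_mulVec_eq
    (isUnit_det_one_sub_smul_contaminated hγ₀ hγ₁ hR₀ hR₁ hπ hp s₀) ?_).symm
  rw [one_sub_smul_contaminated_mulVec (fun s => (hπ s).2), hV]
  funext s
  simp [sup'_univ_eq_of_forall_le V hs₀]

lemma anchoredValue_sub {π' : S → A → ℝ} (hπ' : ∀ s, π' s ∈ stdSimplex ℝ A) :
    anchoredValue c γ R p π' s₀ - V = (1 - γ • contaminated R (pmat π' p) s₀)⁻¹ *ᵥ
      fun s => ∑ a, (π' s a - π s a) * robustQ c γ R p V s a := by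
  have hB := isUnit_det_one_sub_smul_contaminated hγ₀ hγ₁ hR₀ hR₁ hπ' hp s₀
  refine eq_inv_mulVec_of_mulVec_eq hB ?_
  rw [mulVec_sub, anchoredValue, mulVec_mulVec, mul_nonsing_inv _ hB, one_mulVec,
    one_sub_smul_contaminated_mulVec (c := c) (fun s => (hπ' s).2)]
  funext s
  have hVs := congrFun hV s
  simp only [sup'_univ_eq_of_forall_le V hs₀, robustBellman, Pi.add_apply, Pi.sub_apply,
    sub_self, mul_zero, add_zero, sub_mul, sum_sub_distrib] at hVs ⊢
  linarith

end AnchoredValue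

theorem hasGradientAt_dotProduct_anchoredValue {S A : Type*} [Fintype S] [Fintype A] [Nonempty S]
    [DecidableEq S] {c : S → A → ℝ} {γ R : ℝ} {p : S → A → S → ℝ}
    (hp : ∀ s a, p s a ∈ stdSimplex ℝ S) (hγ₀ : 0 ≤ γ) (hγ₁ : γ < 1) (hR₀ : 0 ≤ R) (hR₁ : R ≤ 1)
    {E : Type*} [NormedAddCommGroup E] [InnerProductSpace ℝ E] [CompleteSpace E]
    {π : E → S → A → ℝ} {D : S → A → E} {θ : E}
    (hπ : ∀ᶠ θ' in 𝓝 θ, ∀ s, π θ' s ∈ stdSimplex ℝ A)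
    (hD : ∀ s a, HasGradientAt (fun θ' => π θ' s a) (D s a) θ) {V : S → ℝ}
    (hV : robustBellman c γ R p (π θ) V = V) {s₀ : S} (hs₀ : ∀ s, V s ≤ V s₀) (ρ : S → ℝ) :
    HasGradientAt (fun θ' => ρ ⬝ᵥ anchoredValue c γ R p (π θ') s₀)
      (∑ s, ∑ a, ((ρ ᵥ* (1 - γ • contaminated R (pmat (π θ) p) s₀)⁻¹) s
        * robustQ c γ R p V s a) • D s a) θ := by
  set w := fun θ' => ρ ᵥ* (1 - γ • contaminated R (pmat (π θ') p) s₀)⁻¹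
  set e := fun θ' s => ∑ a, (π θ' s a - π θ s a) * robustQ c γ R p V s a
  -- the resolvent identity; as `e θ = 0`, the factor `w` need only be continuous at `θ`
  have hsplit : (fun θ' => ρ ⬝ᵥ anchoredValue c γ R p (π θ') s₀)
      =ᶠ[𝓝 θ] fun θ' => ρ ⬝ᵥ V + ∑ s, w θ' s • e θ' s := by
    filter_upwards [hπ] with θ' hθ'
    rw [← sub_eq_iff_eq_add', ← dotProduct_sub, anchoredValue_sub hp hγ₀ hγ₁ hR₀ hR₁ hV hs₀ hθ',
      dotProduct_mulVec]
    rfl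
  have hw : ∀ s, ContinuousAt (fun θ' => w θ' s) θ := fun s =>
    (continuous_apply s).continuousAt.comp <|
      (continuous_const.matrix_vecMul continuous_id).continuousAt.comp
        (continuousAt_inv_one_sub_smul_contaminated hγ₀ hγ₁ hR₀ hR₁
          (fun s a => (hD s a).hasFDerivAt.continuousAt) hπ.self_of_nhds hp s₀)
  have he : ∀ s, HasFDerivAt (fun θ' => e θ' s)
      (∑ a, robustQ c γ R p V s a • InnerProductSpace.toDual ℝ E (D s a)) θ := fun s =>
    HasFDerivAt.fun_sum fun a _ => ((hD s a).hasFDerivAt.sub_const _).mul_const _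
  rw [hasGradientAt_iff_hasFDerivAt]
  refine ((HasFDerivAt.fun_sum fun s _ => (he s).smul_of_continuousAt_of_eq_zero
    (hw s) (by simp [e])).const_add (ρ ⬝ᵥ V)).congr_of_eventuallyEq hsplit |>.congr_fderiv ?_
  simp only [map_sum, map_smul, smul_sum, smul_smul]
  rfl

theorem lipschitzOnWith_dotProduct_value {S A : Type*} [Fintype S] [Fintype A] [Nonempty S]
    {c : S → A → ℝ} {γ R : ℝ} {p : S → A → S → ℝ}
    (hp : ∀ s a, p s a ∈ stdSimplex ℝ S) (hγ₀ : 0 ≤ γ) (hγ₁ : γ < 1) (hR₀ : 0 ≤ R) (hR₁ : R ≤ 1)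
    (hc : ∀ s a, |c s a| ≤ 1) {E : Type*} [NormedAddCommGroup E] [InnerProductSpace ℝ E]
    [CompleteSpace E] {Θ : Set E} (hΘ : Convex ℝ Θ) {π : E → S → A → ℝ}
    (hπ : ∀ θ ∈ Θ, ∀ s, π θ s ∈ stdSimplex ℝ A) {D : E → S → A → E} {k : ℝ} (hk : 0 ≤ k)
    (hD : ∀ θ ∈ Θ, ∀ s a, HasGradientAt (fun θ' => π θ' s a) (D θ s a) θ)
    (hDb : ∀ θ ∈ Θ, ∀ s a, ‖D θ s a‖ ≤ k) {V : E → S → ℝ}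
    (hV : ∀ θ ∈ Θ, robustBellman c γ R p (π θ) (V θ) = V θ) {ρ : S → ℝ}
    (hρ : ρ ∈ stdSimplex ℝ S) :
    LipschitzOnWith (Real.toNNReal (Fintype.card A * k / (1 - γ) ^ 2)) (fun θ => ρ ⬝ᵥ V θ) Θ := by
  refine LipschitzOnWith.of_dist_le' fun θ₁ h₁ θ₂ h₂ => ?_
  have hδ : ∀ s a, |π θ₁ s a - π θ₂ s a| ≤ k * ‖θ₁ - θ₂‖ := fun s a =>
    hΘ.abs_sub_le_of_hasGradientAt (fun θ h => hD θ h s a) (fun θ h => hDb θ h s a) h₁ h₂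
  calc dist (ρ ⬝ᵥ V θ₁) (ρ ⬝ᵥ V θ₂) = |∑ s, ρ s * (V θ₁ s - V θ₂ s)| := by
        simp only [Real.dist_eq, dotProduct, mul_sub, sum_sub_distrib]
    _ ≤ dist (V θ₁) (V θ₂) := abs_sum_mul_le_of_mem_stdSimplex hρ fun s =>
        (Real.dist_eq _ _).symm.trans_le (dist_le_pi_dist _ _ s)
    _ ≤ Fintype.card A * (k * ‖θ₁ - θ₂‖) / (1 - γ) ^ 2 :=
        dist_le_of_robustBellman_eq hp hγ₀ hR₀ hR₁ hγ₁ hc (hπ θ₁ h₁) (hπ θ₂ h₂) (hV θ₁ h₁)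
          (hV θ₂ h₂) (by positivity) hδ
    _ = Fintype.card A * k / (1 - γ) ^ 2 * dist θ₁ θ₂ := by rw [dist_eq_norm]; ring

end RobustMDP


open RobustMDP in
theorem stmt_7_general {S A : Type*} [Fintype S] [Fintype A] [Nonempty S] [DecidableEq S]
    {N : ℕ}
    (c : S → A → ℝ) (hc : ∀ s a, c s a ∈ Set.Icc (0 : ℝ) 1)
    (γ : ℝ) (hγ : γ ∈ Set.Ico (0 : ℝ) 1)
    (R : ℝ) (hR : R ∈ Set.Icc (0 : ℝ) 1)
    (p : S → A → S → ℝ) (hp : ∀ s a, p s a ∈ stdSimplex ℝ S)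
    (Θ : Set (EuclideanSpace ℝ (Fin N))) (hΘo : IsOpen Θ) (hΘ : Convex ℝ Θ)
    (π : EuclideanSpace ℝ (Fin N) → S → A → ℝ)
    (hπ : ∀ θ ∈ Θ, ∀ s, π θ s ∈ stdSimplex ℝ A)
    (kπ : ℝ) (hkπ : 0 < kπ)
    (D : EuclideanSpace ℝ (Fin N) → S → A → EuclideanSpace ℝ (Fin N))
    (hD : ∀ θ ∈ Θ, ∀ s a, HasGradientAt (fun θ' => π θ' s a) (D θ s a) θ)
    (hDb : ∀ θ ∈ Θ, ∀ s a, ‖D θ s a‖ ≤ kπ)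
    (V : EuclideanSpace ℝ (Fin N) → S → ℝ)
    (hV : ∀ θ ∈ Θ, ∀ s, V θ s = ∑ a, π θ s a * (c s a
      + γ * (1 - R) * ∑ s', p s a s' * V θ s'
      + γ * R * univ.sup' univ_nonempty (V θ)))
    (Q : EuclideanSpace ℝ (Fin N) → S → A → ℝ)
    (hQ : ∀ θ ∈ Θ, ∀ s a, Q θ s a = c s a + γ * (1 - R) * ∑ s', p s a s' * V θ s'
      + γ * R * univ.sup' univ_nonempty (V θ))
    (ρ : S → ℝ) (hρ : ρ ∈ stdSimplex ℝ S)
    (J : EuclideanSpace ℝ (Fin N) → ℝ) (hJ : ∀ θ, J θ = ∑ s, ρ s * V θ s) :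
    (∀ᵐ θ ∂(volume : Measure (EuclideanSpace ℝ (Fin N))), θ ∈ Θ → DifferentiableAt ℝ J θ) ∧
      ∀ θ ∈ Θ, DifferentiableAt ℝ J θ → ∀ sθ : S, (∀ s, V θ s ≤ V θ sθ) →
        gradient J θ =
          (γ * R / ((1 - γ) * (1 - γ + γ * R))) •
              ∑ s, ∑ a, (dvisit γ R (π θ) p sθ s * Q θ s a) • D θ s a
            + (1 / (1 - γ + γ * R)) •
              ∑ s, ∑ a, ((∑ s₀, ρ s₀ * dvisit γ R (π θ) p s₀ s) * Q θ s a) • D θ s a := by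
  obtain ⟨hγ₀, hγ₁⟩ := hγ
  obtain ⟨hR₀, hR₁⟩ := hR
  have hfix : ∀ θ ∈ Θ, robustBellman c γ R p (π θ) (V θ) = V θ := fun θ hθ =>
    (funext (hV θ hθ)).symm
  have hJρ : J = fun θ => ρ ⬝ᵥ V θ := funext hJ
  refine ⟨?_, fun θ hθ hJd s₀ hs₀ => ?_⟩
  · have hJLip := lipschitzOnWith_dotProduct_value hp hγ₀ hγ₁ hR₀ hR₁
      (fun s a => abs_le.2 ⟨by linarith [(hc s a).1], (hc s a).2⟩) hΘ hπ hkπ.le hD hDb hfix hρ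
    filter_upwards [hJρ ▸ hJLip.ae_differentiableWithinAt_of_mem] with θ hθ hθΘ
    exact (hθ hθΘ).differentiableAt (hΘo.mem_nhds hθΘ)
  have hg := hasGradientAt_dotProduct_anchoredValue hp hγ₀ hγ₁ hR₀ hR₁
    (eventually_of_mem (hΘo.mem_nhds hθ) hπ) (hD θ hθ) (hfix θ hθ) hs₀ ρ
  have hle : ∀ᶠ θ' in 𝓝 θ, ρ ⬝ᵥ anchoredValue c γ R p (π θ') s₀ ≤ J θ' := by
    filter_upwards [hΘo.mem_nhds hθ] with θ' h'
    rw [hJ]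
    exact sum_le_sum fun s _ => mul_le_mul_of_nonneg_left
      (anchoredValue_le hp hγ₀ hγ₁ hR₀ hR₁ (hfix θ' h') (hπ θ' h') s₀ s) (hρ.1 s)
  have heq : ρ ⬝ᵥ anchoredValue c γ R p (π θ) s₀ = J θ := by
    rw [anchoredValue_eq hp hγ₀ hγ₁ hR₀ hR₁ (hfix θ hθ) hs₀ (hπ θ hθ), hJρ]
  have hQθ : ∀ s a, robustQ c γ R p (V θ) s a = Q θ s a := fun s a => (hQ θ hθ s a).symm
  rw [gradient_eq_of_eventually_le hJd hg hle heq]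
  simp only [vecMul_inv_one_sub_smul_contaminated hγ₀ hγ₁ hR₀ hR₁
      (pmat_mem_rowStochastic (hπ θ hθ) hp) s₀ hρ.2, hQθ, add_mul, add_smul, sum_add_distrib,
    smul_sum, smul_smul, mul_assoc]

/-- **Robust policy gradient, almost-everywhere part (Theorem 1(1))**: under Assumption 1 with
`Θ ⊆ ℝ^N` open and convex, for every distribution `ρ` on `S`, the robust objective `J_ρ` is
differentiable at Lebesgue-almost every `θ ∈ Θ`, and at every `θ ∈ Θ` where `J_ρ` is
differentiable its gradient equals `ψ_ρ(θ)`, for every choice of maximizing state `s_θ`. -/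
theorem stmt_7 {S A : Type*} [Fintype S] [Fintype A] [Nonempty S] [Nonempty A] [DecidableEq S]
    {N : ℕ}
    (c : S → A → ℝ) (hc : ∀ s a, c s a ∈ Set.Icc (0 : ℝ) 1)
    (γ : ℝ) (hγ : γ ∈ Set.Ico (0 : ℝ) 1)
    (R : ℝ) (hR : R ∈ Set.Icc (0 : ℝ) 1)
    (p : S → A → S → ℝ) (hp : ∀ s a, p s a ∈ stdSimplex ℝ S)
    (Θ : Set (EuclideanSpace ℝ (Fin N))) (hΘo : IsOpen Θ) (hΘ : Convex ℝ Θ)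
    (π : EuclideanSpace ℝ (Fin N) → S → A → ℝ)
    (hπ : ∀ θ ∈ Θ, ∀ s, π θ s ∈ stdSimplex ℝ A)
    (kπ : ℝ) (hkπ : 0 < kπ)
    (D : EuclideanSpace ℝ (Fin N) → S → A → EuclideanSpace ℝ (Fin N))
    (hD : ∀ θ ∈ Θ, ∀ s a, HasGradientAt (fun θ' => π θ' s a) (D θ s a) θ)
    (hDb : ∀ θ ∈ Θ, ∀ s a, ‖D θ s a‖ ≤ kπ)
    (V : EuclideanSpace ℝ (Fin N) → S → ℝ)
    (hV : ∀ θ ∈ Θ, ∀ s, V θ s = ∑ a, π θ s a * (c s a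
      + γ * (1 - R) * ∑ s', p s a s' * V θ s'
      + γ * R * univ.sup' univ_nonempty (V θ)))
    (Q : EuclideanSpace ℝ (Fin N) → S → A → ℝ)
    (hQ : ∀ θ ∈ Θ, ∀ s a, Q θ s a = c s a + γ * (1 - R) * ∑ s', p s a s' * V θ s'
      + γ * R * univ.sup' univ_nonempty (V θ))
    (ρ : S → ℝ) (hρ : ρ ∈ stdSimplex ℝ S)
    (J : EuclideanSpace ℝ (Fin N) → ℝ) (hJ : ∀ θ, J θ = ∑ s, ρ s * V θ s) :
    (∀ᵐ θ ∂(volume : Measure (EuclideanSpace ℝ (Fin N))), θ ∈ Θ → DifferentiableAt ℝ J θ) ∧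
      ∀ θ ∈ Θ, DifferentiableAt ℝ J θ → ∀ sθ : S, (∀ s, V θ s ≤ V θ sθ) →
        gradient J θ =
          (γ * R / ((1 - γ) * (1 - γ + γ * R))) •
              ∑ s, ∑ a, (dvisit γ R (π θ) p sθ s * Q θ s a) • D θ s a
            + (1 / (1 - γ + γ * R)) •
              ∑ s, ∑ a, ((∑ s₀, ρ s₀ * dvisit γ R (π θ) p s₀ s) * Q θ s a) • D θ s a :=
  stmt_7_general c hc γ hγ R hR p hp Θ hΘo hΘ π hπ kπ hkπ D hD hDb V hV Q hQ ρ hρ J hJ
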